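/- For every integer n ≥ 1, k(C_n) ≤ α(n) ≤ (166822111/109486080)·ω(n). -/

import Mathlib

/-!
Let `G` be cyclic of order `n`, `p` the least prime factor of `n`, and `H` the subgroup of order
`m = n / p`, which has index `p`. Group the terms of a zero-sumfree sequence lying outside `H` by
their order. While some order class has `p` terms, pigeonhole on prefix sums modulo `H` extracts
at most `p` of them with sum in `H`. Such a block of terms of order `d ∤ m` has a sum whose order
divides `d / p`, so the block contributes at most `p / d ≤ 1 / ord(sum)`. Replacing the blocks by
their sums leaves a zero-sumfree sequence in `H`, bounded by `α(m)` by induction, together with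
fewer than `p` terms of each order `d ∣ n`, `d ∤ m`, contributing at most
`∑ (p - 1) / d = α(n) - α(m)`.

For the second inequality, a divisor `d` of `n` with `P⁻(d) = p` is `p` times a number whose
prime factors are prime factors `q ≥ p` of `n`, so an Euler product bounds `α(n)` by
`∑_{p ∣ n} ∏_{q ∣ n, q > p} q / (q - 1)`. As `q / (q - 1)` decreases, this is at most
`g(ω(n))`, the same sum over the first `ω(n)` primes. Since the `k`-th prime is at least
`3k - 2` for `k ≥ 10`, from `k = 9` on each step adds at most `1 + c / 3 ≤ c` to `g`, where
`c = g(9) / 9 = 166822111 / 109486080`.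
-/

open scoped BigOperators

attribute [local instance] Classical.propDecidable

/-- A sequence (multiset) over `G` is zero-sumfree if no nonempty sub-multiset sums to `0`. -/
def IsZeroSumFree {G : Type*} [AddCommGroup G] (S : Multiset G) : Prop :=
  ∀ T : Multiset G, T ≤ S → T ≠ 0 → T.sum ≠ 0

/-- A minimal zero-sum sequence: sum `0`, and no nonempty proper sub-multiset sums to `0`. -/
def IsMinimalZeroSum {G : Type*} [AddCommGroup G] (S : Multiset G) : Prop :=
  S.sum = 0 ∧ ∀ T : Multiset G, T < S → T ≠ 0 → T.sum ≠ 0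

/-- The cross number of a sequence: `k(S) = Σ_{g ∈ S} 1/ord(g)`. -/
noncomputable def crossNumber {G : Type*} [AddCommGroup G] (S : Multiset G) : ℝ :=
  (S.map fun g => (1 : ℝ) / (addOrderOf g)).sum

/-- The little cross number `k(G)`: max of `k(S)` over zero-sumfree sequences `S` over `G`. -/
noncomputable def littleCrossNumber (G : Type*) [AddCommGroup G] : ℝ :=
  sSup {x : ℝ | ∃ S : Multiset G, IsZeroSumFree S ∧ crossNumber S = x}

/-- The cross number `K(G)`: max of `k(S)` over minimal zero-sum sequences `S` over `G`. -/
noncomputable def bigCrossNumber (G : Type*) [AddCommGroup G] : ℝ :=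
  sSup {x : ℝ | ∃ S : Multiset G, IsMinimalZeroSum S ∧ crossNumber S = x}

/-- The Davenport constant `D(G)`. -/
noncomputable def davenport (G : Type*) [AddCommGroup G] : ℕ :=
  sInf {t | 1 ≤ t ∧ ∀ S : Multiset G, t ≤ Multiset.card S →
    ∃ T, T ≤ S ∧ T ≠ 0 ∧ T.sum = 0}

/-- The constant `η(G)`. -/
noncomputable def etaConst (G : Type*) [AddCommGroup G] : ℕ :=
  sInf {t | 1 ≤ t ∧ ∀ S : Multiset G, t ≤ Multiset.card S →
    ∃ T, T ≤ S ∧ T ≠ 0 ∧ Multiset.card T ≤ AddMonoid.exponent G ∧ T.sum = 0}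

/-- `υ_i(d',d) = A_i / gcd(A_i, B_i)` where `A_i = gcd(d', n_i)` and
`B_i = lcm(d, n_i)/lcm(d', n_i)`. -/
def upsilon (ni d' d : ℕ) : ℕ :=
  Nat.gcd d' ni / Nat.gcd (Nat.gcd d' ni) (Nat.lcm d ni / Nat.lcm d' ni)

/-- `k*` of `C_{n_1} ⊕ ... ⊕ C_{n_r}`, computed from the primary decomposition. -/
noncomputable def kStarTuple {r : ℕ} (n : Fin r → ℕ) : ℝ :=
  ∑ i, ∑ p ∈ (n i).primeFactors,
    ((p ^ ((n i).factorization p) : ℝ) - 1) / (p ^ ((n i).factorization p))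

/-- `α(n) = Σ_{d | n} (P⁻(d) − 1)/d`. -/
noncomputable def alphaFn (n : ℕ) : ℝ :=
  ∑ d ∈ n.divisors, ((d.minFac : ℝ) - 1) / d

/-- `β(n) = Σ_{p | n prime} (p − 1)/p`. -/
noncomputable def betaFn (n : ℕ) : ℝ :=
  ∑ p ∈ n.primeFactors, ((p : ℝ) - 1) / p

theorem Multiset.exists_le_map_eq_of_le_map {α β : Type*} {f : α → β} {s : Multiset α}
    {t : Multiset β} (h : t ≤ s.map f) : ∃ u ≤ s, u.map f = t := by
  induction s using Quotient.inductionOn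
  induction t using Quotient.inductionOn
  obtain ⟨l, hl, hsub⟩ := h
  obtain ⟨l', hl', rfl⟩ := List.sublist_map_iff.mp hsub
  exact ⟨l', hl'.subperm, Quotient.sound hl⟩

theorem Multiset.sum_map_le_sum_mul_of_card_filter_le {α β : Type*} [DecidableEq β]
    {L : Multiset α} {key : α → β} {F : β → ℝ} {D : Finset β} {B : ℝ}
    (hL : ∀ g ∈ L, key g ∈ D) (hF : ∀ d ∈ D, 0 ≤ F d)
    (hB : ∀ d, (card (L.filter (key · = d)) : ℝ) ≤ B) :
    (L.map fun g => F (key g)).sum ≤ ∑ d ∈ D, B * F d := by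
  have hsub : (L.map key).toFinset ⊆ D := fun d hd => by
    obtain ⟨g, hg, rfl⟩ := mem_map.mp (mem_toFinset.mp hd)
    exact hL g hg
  rw [show L.map (fun g => F (key g)) = (L.map key).map F from (map_map _ _ _).symm,
    Finset.sum_multiset_map_count]
  calc ∑ d ∈ (L.map key).toFinset, (L.map key).count d • F d
      ≤ ∑ d ∈ (L.map key).toFinset, B * F d := by
        refine Finset.sum_le_sum fun d hd => ?_
        rw [nsmul_eq_mul, count_map]
        gcongr
        · exact hF d (hsub hd)
        · simpa [eq_comm] using hB d
    _ ≤ ∑ d ∈ D, B * F d :=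
        Finset.sum_le_sum_of_subset_of_nonneg hsub fun d hd _ =>
          mul_nonneg ((Nat.cast_nonneg _).trans (hB d)) (hF d hd)

section AddCommGroup

variable {G : Type*} [AddCommGroup G]

theorem Multiset.exists_le_sum_mem_of_index_le (H : AddSubgroup G) [H.FiniteIndex]
    {S : Multiset G} (hS : H.index ≤ card S) :
    ∃ U ≤ S, U ≠ 0 ∧ card U ≤ H.index ∧ U.sum ∈ H := by
  set l := S.toList
  let prefixSum (i : Fin (H.index + 1)) : G ⧸ H := ((l.take i).sum : G)
  obtain ⟨i, j, heq, hij⟩ : ∃ i j, prefixSum i = prefixSum j ∧ i ≠ j := by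
    refine Function.not_injective_iff.mp fun hinj => ?_
    have := Nat.card_le_card_of_injective prefixSum hinj
    simp [AddSubgroup.index] at this
  wlog hlt : i < j generalizing i j
  · exact this j i heq.symm hij.symm (lt_of_le_of_ne (not_lt.mp hlt) hij.symm)
  replace hlt : (i : ℕ) < j := hlt
  have hj : (j : ℕ) ≤ l.length := by simpa [l] using (Nat.lt_succ_iff.mp j.2).trans hS
  refine ⟨(l.take j).drop i, ?_, ?_, ?_, ?_⟩
  · rw [← coe_toList S]
    exact coe_le.mpr ((List.drop_sublist _ _).trans (List.take_sublist _ _)).subperm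
  · simp only [ne_eq, coe_eq_zero, ← List.length_eq_zero_iff, List.length_drop,
      List.length_take, min_eq_left hj]
    omega
  · simp only [coe_card, List.length_drop, List.length_take]
    omega
  · have hsplit := List.sum_take_add_sum_drop (l.take j) i
    rw [List.take_take, min_eq_left hlt.le] at hsplit
    rw [sum_coe, ← neg_add_cancel_left (l.take i).sum ((l.take j).drop i).sum, hsplit]
    exact QuotientAddGroup.eq.mp heq

theorem Multiset.exists_eq_blocks_sum_add {κ : Type*} [DecidableEq κ] (H : AddSubgroup G)
    [H.FiniteIndex] (key : G → κ) (S : Multiset G) :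
    ∃ (Us : Multiset (Multiset G)) (L : Multiset G), S = Us.sum + L ∧
      (∀ U ∈ Us,
        U ≠ 0 ∧ card U ≤ H.index ∧ U.sum ∈ H ∧ ∃ d, ∀ g ∈ U, key g = d) ∧
      ∀ d, card (L.filter (key · = d)) < H.index := by
  induction hS : card S using Nat.strong_induction_on generalizing S with
  | _ k ih =>
  by_cases hex : ∃ d, H.index ≤ card (S.filter (key · = d))
  · obtain ⟨d, hd⟩ := hex
    obtain ⟨U, hUle, hU0, hUcard, hUsum⟩ := exists_le_sum_mem_of_index_le H hd
    have hUS : U ≤ S := hUle.trans (filter_le _ _)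
    have hlt : card (S - U) < k := by
      rw [card_sub hUS, ← hS]
      exact Nat.sub_lt ((card_pos.mpr hU0).trans_le (card_le_card hUS)) (card_pos.mpr hU0)
    obtain ⟨Us, L, hSL, hUs, hL⟩ := ih _ hlt (S - U) rfl
    refine ⟨U ::ₘ Us, L, ?_, ?_, hL⟩
    · rw [sum_cons, add_assoc, ← hSL, add_tsub_cancel_of_le hUS]
    · intro V hV
      rcases mem_cons.mp hV with rfl | hV
      · exact ⟨hU0, hUcard, hUsum, d, fun g hg => (mem_filter.mp (mem_of_le hUle hg)).2⟩
      · exact hUs V hV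
  · exact ⟨0, S, by simp, by simp, fun d => not_le.mp fun h => hex ⟨d, h⟩⟩

@[simp]
theorem crossNumber_zero : crossNumber (0 : Multiset G) = 0 := by
  simp [crossNumber]

theorem crossNumber_add (S T : Multiset G) :
    crossNumber (S + T) = crossNumber S + crossNumber T := by
  simp [crossNumber]

theorem crossNumber_sum (Us : Multiset (Multiset G)) :
    crossNumber Us.sum = (Us.map crossNumber).sum := by
  induction Us using Multiset.induction with
  | empty => simp
  | cons U Us ih => simp [crossNumber_add, ih]

theorem crossNumber_map_of_injective {G' : Type*} [AddCommGroup G'] (f : G →+ G')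
    (hf : Function.Injective f) (S : Multiset G) : crossNumber (S.map f) = crossNumber S := by
  simp [crossNumber, addOrderOf_injective f hf]

theorem crossNumber_eq_card_div {U : Multiset G} {d : ℕ} (hU : ∀ g ∈ U, addOrderOf g = d) :
    crossNumber U = Multiset.card U / d := by
  rw [crossNumber, Multiset.map_congr rfl fun g hg => by rw [hU g hg], Multiset.map_const',
    Multiset.sum_replicate, nsmul_eq_mul, mul_one_div]

theorem IsZeroSumFree.mono {S T : Multiset G} (hS : IsZeroSumFree S) (hT : T ≤ S) :
    IsZeroSumFree T :=
  fun U hU => hS U (hU.trans hT)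

theorem IsZeroSumFree.of_map {G' : Type*} [AddCommGroup G'] (f : G →+ G') {S : Multiset G}
    (hS : IsZeroSumFree (S.map f)) : IsZeroSumFree S := fun T hT hT0 hsum =>
  hS (T.map f) (Multiset.map_le_map hT) (by simpa using hT0)
    (by rw [← map_multiset_sum, hsum, map_zero])

theorem IsZeroSumFree.map_sum {Us : Multiset (Multiset G)} (hUs : ∀ U ∈ Us, U ≠ 0)
    (h : IsZeroSumFree Us.sum) : IsZeroSumFree (Us.map Multiset.sum) := by
  intro T hT hT0 hsum
  obtain ⟨Vs, hVs, rfl⟩ := Multiset.exists_le_map_eq_of_le_map hT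
  obtain ⟨V, hV⟩ := Multiset.exists_mem_of_ne_zero (by simpa using hT0)
  refine h Vs.sum ?_ ?_ ?_
  · obtain ⟨Ws, rfl⟩ := Multiset.le_iff_exists_add.mp hVs
    simp
  · exact fun h0 => hUs V (Multiset.mem_of_le hVs hV) (Multiset.sum_eq_zero_iff.mp h0 V hV)
  · rwa [← Multiset.join, Multiset.sum_join]

theorem IsZeroSumFree.add_map_sum {S S₀ : Multiset G} {Us : Multiset (Multiset G)}
    (hS : IsZeroSumFree S) (hle : S₀ + Us.sum ≤ S) (hUs : ∀ U ∈ Us, U ≠ 0) :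
    IsZeroSumFree (S₀ + Us.map Multiset.sum) := by
  -- each term of `S₀` is a one-term block
  have hle' : ((S₀.map fun g => ({g} : Multiset G)) + Us).sum ≤ S := by
    rwa [Multiset.sum_add, Multiset.sum_map_singleton]
  have := (hS.mono hle').map_sum ?_
  · simpa [Multiset.map_map, Function.comp_def] using this
  · simp only [Multiset.mem_add, Multiset.mem_map]
    rintro U (⟨g, -, rfl⟩ | hU)
    exacts [Multiset.singleton_ne_zero g, hUs U hU]

theorem IsZeroSumFree.eq_zero_of_subsingleton [Subsingleton G] {S : Multiset G}
    (hS : IsZeroSumFree S) : S = 0 := by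
  by_contra h
  obtain ⟨g, hg⟩ := Multiset.exists_mem_of_ne_zero h
  exact hS {g} (Multiset.singleton_le.mpr hg) (Multiset.singleton_ne_zero g)
    (Subsingleton.elim _ _)

theorem IsZeroSumFree.crossNumber_le_of_forall_mem {H : AddSubgroup G} {B : ℝ}
    (hH : ∀ T : Multiset H, IsZeroSumFree T → crossNumber T ≤ B) {S : Multiset G}
    (hS : IsZeroSumFree S) (hSH : ∀ g ∈ S, g ∈ H) : crossNumber S ≤ B := by
  lift S to Multiset H using hSH
  exact (crossNumber_map_of_injective H.subtype H.subtype_injective S).trans_le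
    (hH S (hS.of_map H.subtype))

end AddCommGroup

theorem Nat.mul_dvd_of_dvd_mul_of_not_dvd {p m d k : ℕ} (hp : p.Prime) (hd : d ∣ p * m)
    (hdm : ¬ d ∣ m) (hkd : k ∣ d) (hkm : k ∣ m) : k * p ∣ d := by
  obtain ⟨e, rfl⟩ := hkd
  obtain ⟨m', rfl⟩ := hkm
  refine mul_dvd_mul_left k (by_contra fun hpe => hdm (mul_dvd_mul_left k ?_))
  rcases Nat.eq_zero_or_pos k with rfl | hk
  · simp at hdm
  refine ((Nat.Prime.coprime_iff_not_dvd hp).mpr hpe).symm.dvd_of_dvd_mul_left ?_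
  exact (Nat.mul_dvd_mul_iff_left hk).mp (by rwa [mul_left_comm])

theorem crossNumber_le_one_div_addOrderOf_sum {G : Type*} [AddCommGroup G] [Finite G]
    {p m d : ℕ} (hp : p.Prime) (hpm : Nat.card G = p * m) {U : Multiset G} (hU0 : U ≠ 0)
    (hU : ∀ g ∈ U, addOrderOf g = d) (hUm : ∀ g ∈ U, m • g ≠ 0)
    (hcard : Multiset.card U ≤ p) (hsum : m • U.sum = 0) :
    crossNumber U ≤ 1 / addOrderOf U.sum := by
  obtain ⟨g, hg⟩ := Multiset.exists_mem_of_ne_zero hU0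
  have hd : d ∣ p * m := hU g hg ▸ hpm ▸ addOrderOf_dvd_natCard g
  have hdm : ¬ d ∣ m := hU g hg ▸ mt addOrderOf_dvd_iff_nsmul_eq_zero.mp (hUm g hg)
  have hd0 : 0 < d := Nat.pos_of_dvd_of_pos hd (hpm ▸ Nat.card_pos)
  have hkm := addOrderOf_dvd_of_nsmul_eq_zero hsum
  have hkd : addOrderOf U.sum ∣ d := by
    refine addOrderOf_dvd_of_nsmul_eq_zero ?_
    rw [Multiset.smul_sum]
    exact Multiset.sum_eq_zero fun x hx => by
      obtain ⟨g, hg, rfl⟩ := Multiset.mem_map.mp hx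
      rw [← hU g hg, addOrderOf_nsmul_eq_zero]
  have hkpd := Nat.le_of_dvd hd0 (Nat.mul_dvd_of_dvd_mul_of_not_dvd hp hd hdm hkd hkm)
  have hk : 0 < addOrderOf U.sum := Nat.pos_of_dvd_of_pos hkd hd0
  rw [crossNumber_eq_card_div hU, div_le_div_iff₀ (by positivity) (by positivity)]
  exact_mod_cast (Nat.mul_le_mul_right _ hcard).trans (by rwa [mul_comm, one_mul])

theorem crossNumber_le_sum_divisors_sdiff {G : Type*} [AddCommGroup G] [Finite G] {p m : ℕ}
    (hpm : Nat.card G = p * m) {L : Multiset G} (hL : ∀ g ∈ L, m • g ≠ 0)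
    (hcount : ∀ d, Multiset.card (L.filter (addOrderOf · = d)) < p) :
    crossNumber L ≤ ∑ d ∈ (p * m).divisors \ m.divisors, ((p : ℝ) - 1) / d := by
  simp_rw [div_eq_mul_one_div ((p : ℝ) - 1)]
  refine Multiset.sum_map_le_sum_mul_of_card_filter_le (F := fun d : ℕ => 1 / (d : ℝ))
    (key := addOrderOf) (fun g hg => ?_) (fun d _ => by positivity) fun d => ?_
  · rw [Finset.mem_sdiff, Nat.mem_divisors, ← hpm]
    exact ⟨⟨addOrderOf_dvd_natCard g, Nat.card_pos.ne'⟩,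
      fun h => hL g hg (addOrderOf_dvd_iff_nsmul_eq_zero.mp (Nat.dvd_of_mem_divisors h))⟩
  · rw [le_sub_iff_add_le]
    exact_mod_cast hcount d

theorem Nat.minFac_eq_of_dvd_of_not_dvd_div {n d : ℕ} (hd : d ∣ n)
    (hdn : ¬ d ∣ n / n.minFac) : d.minFac = n.minFac := by
  rcases eq_or_ne n 1 with rfl | hn
  · simp_all
  have hp := Nat.minFac_prime hn
  have hpd : n.minFac ∣ d := by
    by_contra hpd
    refine hdn (((Nat.Prime.coprime_iff_not_dvd hp).mpr hpd).symm.dvd_of_dvd_mul_left ?_)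
    rwa [Nat.mul_div_cancel' (Nat.minFac_dvd n)]
  have hd1 : d ≠ 1 := by rintro rfl; exact hp.ne_one (Nat.dvd_one.mp hpd)
  exact le_antisymm (Nat.minFac_le_of_dvd hp.two_le hpd)
    (Nat.minFac_le_of_dvd (Nat.minFac_prime hd1).two_le ((Nat.minFac_dvd d).trans hd))

theorem alphaFn_nonneg (n : ℕ) : 0 ≤ alphaFn n :=
  Finset.sum_nonneg fun d _ =>
    div_nonneg (sub_nonneg.mpr (by exact_mod_cast d.minFac_pos)) d.cast_nonneg

theorem alphaFn_eq_add_sum_sdiff {n : ℕ} (hn : n ≠ 0) :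
    alphaFn n = alphaFn (n / n.minFac) +
      ∑ d ∈ n.divisors \ (n / n.minFac).divisors, ((n.minFac : ℝ) - 1) / d := by
  rw [alphaFn, alphaFn, add_comm,
    ← Finset.sum_sdiff (Nat.divisors_subset_of_dvd hn (Nat.div_dvd_of_dvd n.minFac_dvd))]
  congr 1
  refine Finset.sum_congr rfl fun d hd => ?_
  obtain ⟨hdn, hdm⟩ := Finset.mem_sdiff.mp hd
  rw [Nat.minFac_eq_of_dvd_of_not_dvd_div (Nat.dvd_of_mem_divisors hdn) fun h => hdm ?_]
  exact Nat.mem_divisors.mpr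
    ⟨h, (Nat.div_ne_zero_iff_of_dvd n.minFac_dvd).mpr ⟨hn, n.minFac_pos.ne'⟩⟩

theorem IsZeroSumFree.crossNumber_le_add_sum_divisors_sdiff {G : Type*} [AddCommGroup G]
    [Finite G] [IsAddCyclic G] {p m : ℕ} (hp : p.Prime) (hpm : Nat.card G = p * m) {B : ℝ}
    (hB : ∀ T : Multiset (nsmulAddMonoidHom m : G →+ G).ker,
      IsZeroSumFree T → crossNumber T ≤ B)
    {S : Multiset G} (hS : IsZeroSumFree S) :
    crossNumber S ≤ B + ∑ d ∈ (p * m).divisors \ m.divisors, ((p : ℝ) - 1) / d := by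
  set H := (nsmulAddMonoidHom m : G →+ G).ker
  have hm : 0 < m := Nat.pos_of_ne_zero fun h => Nat.card_pos.ne' (by rw [hpm, h, mul_zero])
  have hHindex : H.index = p := by
    rw [IsAddCyclic.index_nsmulAddMonoidHom_ker, hpm, Nat.gcd_mul_left_left,
      Nat.mul_div_cancel _ hm]
  have hmemH : ∀ g, g ∈ H ↔ m • g = 0 := fun g => AddMonoidHom.mem_ker
  obtain ⟨Us, L, hS₁, hUs, hL⟩ := (S.filter (· ∉ H)).exists_eq_blocks_sum_add H addOrderOf
  have hdecomp : S = S.filter (· ∈ H) + Us.sum + L := by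
    rw [add_assoc, ← hS₁, Multiset.filter_add_not]
  have hS₁mem : ∀ g ∈ Us.sum + L, m • g ≠ 0 := by
    rw [← hS₁]
    exact fun g hg => (hmemH g).not.mp (Multiset.mem_filter.mp hg).2
  have hlift : crossNumber (S.filter (· ∈ H) + Us.map Multiset.sum) ≤ B := by
    refine (hS.add_map_sum (le_self_add.trans_eq hdecomp.symm) fun U hU => (hUs U hU).1
      ).crossNumber_le_of_forall_mem hB fun g hg => ?_
    rcases Multiset.mem_add.mp hg with hg | hg
    · exact (Multiset.mem_filter.mp hg).2
    · obtain ⟨U, hU, rfl⟩ := Multiset.mem_map.mp hg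
      exact (hUs U hU).2.2.1
  have hblocks : (Us.map crossNumber).sum ≤ crossNumber (Us.map Multiset.sum) := by
    rw [crossNumber, Multiset.map_map]
    refine Multiset.sum_map_le_sum_map _ _ fun U hU => ?_
    obtain ⟨hU0, hUcard, hUsum, d, hd⟩ := hUs U hU
    have hUle : U ≤ Us.sum + L := (Multiset.le_sum_of_mem hU).trans le_self_add
    exact crossNumber_le_one_div_addOrderOf_sum hp hpm hU0 hd
      (fun g hg => hS₁mem g (Multiset.mem_of_le hUle hg)) (hHindex ▸ hUcard)
      ((hmemH _).mp hUsum)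
  have hrest := crossNumber_le_sum_divisors_sdiff hpm (L := L)
    (fun g hg => hS₁mem g (Multiset.mem_add.mpr (Or.inr hg))) (hHindex ▸ hL)
  calc crossNumber S
      = crossNumber (S.filter (· ∈ H)) + (Us.map crossNumber).sum + crossNumber L := by
        conv_lhs => rw [hdecomp]
        rw [crossNumber_add, crossNumber_add, crossNumber_sum]
    _ ≤ B + ∑ d ∈ (p * m).divisors \ m.divisors, ((p : ℝ) - 1) / d := by
        rw [crossNumber_add] at hlift
        linarith

theorem IsZeroSumFree.crossNumber_le_alphaFn {G : Type*} [AddCommGroup G] [Finite G]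
    [IsAddCyclic G] {S : Multiset G} (hS : IsZeroSumFree S) :
    crossNumber S ≤ alphaFn (Nat.card G) := by
  induction hn : Nat.card G using Nat.strong_induction_on generalizing G with
  | _ n ih =>
  subst hn
  obtain h1 | h1 := eq_or_ne (Nat.card G) 1
  · have := (Nat.card_eq_one_iff_unique.mp h1).1
    rw [hS.eq_zero_of_subsingleton, crossNumber_zero]
    exact alphaFn_nonneg _
  set p := (Nat.card G).minFac
  set m := Nat.card G / p
  have hp : p.Prime := Nat.minFac_prime h1
  have hpm : Nat.card G = p * m := (Nat.mul_div_cancel' (Nat.minFac_dvd _)).symm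
  have hHcard : Nat.card (nsmulAddMonoidHom m : G →+ G).ker = m := by
    rw [IsAddCyclic.card_nsmulAddMonoidHom_ker, hpm, Nat.gcd_mul_left_left]
  have hmn : m < Nat.card G := Nat.div_lt_self Nat.card_pos hp.one_lt
  refine (hS.crossNumber_le_add_sum_divisors_sdiff hp hpm (B := alphaFn m)
    fun T hT => ih m hmn hT hHcard).trans_eq ?_
  rw [alphaFn_eq_add_sum_sdiff Nat.card_pos.ne', ← hpm]

section PrimeTailSum

open Finset

noncomputable def primeTailSum (Q : Finset ℕ) : ℝ :=
  ∑ p ∈ Q, ∏ q ∈ Q with p < q, (1 - (q : ℝ)⁻¹)⁻¹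

theorem sum_inv_le_prod_of_subset_factoredNumbers {s D : Finset ℕ} (hs : ∀ p ∈ s, p.Prime)
    (hD : ∀ d ∈ D, d ∈ Nat.factoredNumbers s) :
    ∑ d ∈ D, (d : ℝ)⁻¹ ≤ ∏ p ∈ s, (1 - (p : ℝ)⁻¹)⁻¹ := by
  let f : ℕ →* ℝ :=
    { toFun n := (n : ℝ)⁻¹, map_one' := by simp, map_mul' m n := by simp [mul_comm] }
  have hf : ∀ {p : ℕ}, p.Prime → ‖f p‖ < 1 := fun {p} hp => by
    have : (1 : ℝ) < p := by exact_mod_cast hp.one_lt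
    simpa [f, abs_of_pos] using inv_lt_one_of_one_lt₀ this
  have hsum := (EulerProduct.summable_and_hasSum_factoredNumbers_prod_filter_prime_geometric hf s).2
  rw [filter_true_of_mem hs] at hsum
  have := sum_le_hasSum D (fun _ _ => Set.indicator_nonneg (fun d _ => by simp [f]) _)
    (hasSum_subtype_iff_indicator.mp hsum)
  refine le_of_eq_of_le (sum_congr rfl fun d hd => ?_) this
  simp [Set.indicator_of_mem (hD d hd), f]

theorem Nat.div_minFac_mem_factoredNumbers {n d : ℕ} (hn : n ≠ 0) (hd : d ∈ n.divisors) :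
    d / d.minFac ∈
      Nat.factoredNumbers (insert d.minFac (n.primeFactors.filter (d.minFac < ·))) := by
  have hdn := Nat.dvd_of_mem_divisors hd
  have hd0 : d / d.minFac ≠ 0 :=
    (Nat.div_ne_zero_iff_of_dvd d.minFac_dvd).mpr ⟨Nat.ne_of_gt (Nat.pos_of_mem_divisors hd),
      d.minFac_pos.ne'⟩
  refine Nat.mem_factoredNumbers_of_primeFactors_subset hd0 fun q hq => ?_
  have hqd : q ∣ d := (Nat.dvd_of_mem_primeFactors hq).trans (Nat.div_dvd_of_dvd d.minFac_dvd)
  have hq := Nat.prime_of_mem_primeFactors hq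
  rw [Finset.mem_insert, Finset.mem_filter, Nat.mem_primeFactors]
  exact (Nat.minFac_le_of_dvd hq.two_le hqd).eq_or_lt.imp Eq.symm
    fun h => ⟨⟨hq, hqd.trans hdn, hn⟩, h⟩

theorem sum_divisors_minFac_eq_le_prod {n p : ℕ} (hn : n ≠ 0) (hp : p ∈ n.primeFactors) :
    ∑ d ∈ n.divisors with d.minFac = p, ((d.minFac : ℝ) - 1) / d ≤
      ∏ q ∈ n.primeFactors with p < q, (1 - (q : ℝ)⁻¹)⁻¹ := by
  set D := n.divisors.filter (·.minFac = p)
  set Q := insert p (n.primeFactors.filter (p < ·))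
  have hp' := Nat.prime_of_mem_primeFactors hp
  have hpR : (1 : ℝ) < p := by exact_mod_cast hp'.one_lt
  have hpD : ∀ d ∈ D, p ∣ d := fun d hd => (mem_filter.mp hd).2 ▸ Nat.minFac_dvd d
  have hfactored : ∀ e ∈ D.image (· / p), e ∈ Nat.factoredNumbers Q := fun e he => by
    obtain ⟨d, hd, rfl⟩ := mem_image.mp he
    obtain ⟨hdn, rfl⟩ := mem_filter.mp hd
    exact Nat.div_minFac_mem_factoredNumbers hn hdn
  have hsum : ∑ d ∈ D, ((d.minFac : ℝ) - 1) / d =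
      ((p : ℝ) - 1) * (p : ℝ)⁻¹ * ∑ e ∈ D.image (· / p), (e : ℝ)⁻¹ := by
    rw [sum_image fun x hx y hy h => by
      rw [← Nat.div_mul_cancel (hpD x hx), ← Nat.div_mul_cancel (hpD y hy), h], mul_sum]
    refine sum_congr rfl fun d hd => ?_
    rw [(mem_filter.mp hd).2, Nat.cast_div (hpD d hd) (by positivity)]
    field_simp
  have hprimes : ∀ q ∈ Q, q.Prime := by
    simp only [Q, mem_insert, mem_filter]
    rintro q (rfl | ⟨hq, -⟩)
    exacts [hp', Nat.prime_of_mem_primeFactors hq]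
  calc ∑ d ∈ D, ((d.minFac : ℝ) - 1) / d
      ≤ ((p : ℝ) - 1) * (p : ℝ)⁻¹ * ∏ q ∈ Q, (1 - (q : ℝ)⁻¹)⁻¹ := by
        rw [hsum]
        gcongr
        exact sum_inv_le_prod_of_subset_factoredNumbers hprimes hfactored
    _ = _ := by
        have hunit : ((p : ℝ) - 1) * (p : ℝ)⁻¹ * (1 - (p : ℝ)⁻¹)⁻¹ = 1 := by
          field_simp
          exact div_self (by linarith)
        rw [prod_insert (by simp), ← mul_assoc, hunit, one_mul]

theorem alphaFn_le_primeTailSum {n : ℕ} (hn : n ≠ 0) :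
    alphaFn n ≤ primeTailSum n.primeFactors := by
  have hfib : ∀ d ∈ n.divisors,
      ((d.minFac : ℝ) - 1) / d ≠ 0 → d.minFac ∈ n.primeFactors := by
    intro d hd h
    have hd1 : d ≠ 1 := by rintro rfl; simp at h
    exact Nat.mem_primeFactors.mpr
      ⟨Nat.minFac_prime hd1, (Nat.minFac_dvd d).trans (Nat.dvd_of_mem_divisors hd), hn⟩
  rw [alphaFn, ← sum_filter_of_ne hfib, ← sum_fiberwise_eq_sum_filter]
  exact sum_le_sum fun p hp => sum_divisors_minFac_eq_le_prod hn hp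

theorem primeTailSum_insert {a : ℕ} {s : Finset ℕ} (h : ∀ x ∈ s, x < a) :
    primeTailSum (insert a s) = 1 + (1 - (a : ℝ)⁻¹)⁻¹ * primeTailSum s := by
  have ha : a ∉ s := fun ha => lt_irrefl a (h a ha)
  rw [primeTailSum, sum_insert ha, primeTailSum, mul_sum]
  congr 1
  · rw [filter_insert, if_neg (lt_irrefl a), filter_false_of_mem (fun x hx => (h x hx).not_gt),
      prod_empty]
  · refine sum_congr rfl fun p hp => ?_
    rw [filter_insert, if_pos (h p hp), prod_insert (fun h' => ha (mem_filter.mp h').1)]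

theorem one_sub_inv_inv_nonneg (a : ℕ) : 0 ≤ (1 - (a : ℝ)⁻¹)⁻¹ :=
  inv_nonneg.mpr (sub_nonneg.mpr (Nat.cast_inv_le_one a))

theorem one_sub_inv_inv_le_of_le {a b : ℕ} (ha : 2 ≤ a) (hab : a ≤ b) :
    (1 - (b : ℝ)⁻¹)⁻¹ ≤ (1 - (a : ℝ)⁻¹)⁻¹ := by
  have ha' : (2 : ℝ) ≤ a := by exact_mod_cast ha
  have hab' : (a : ℝ) ≤ b := by exact_mod_cast hab
  have : (a : ℝ)⁻¹ ≤ 2⁻¹ := by gcongr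
  gcongr
  linarith

theorem Nat.count_prime_three_mul_add_one_le {k : ℕ} (hk : 9 ≤ k) :
    Nat.count Nat.Prime (3 * k + 1) ≤ k := by
  induction k, hk using Nat.le_induction with
  | base => decide
  | succ k hk ih =>
    have h3 : ¬ (3 * k + 1 + 1 + 1).Prime := by
      rw [show 3 * k + 1 + 1 + 1 = 3 * (k + 1) by ring]
      exact Nat.not_prime_mul (by norm_num) (by omega)
    have h12 : ¬ ((3 * k + 1).Prime ∧ (3 * k + 1 + 1).Prime) := fun ⟨h1, h2⟩ => by
      have := h1.eq_two_or_odd; have := h2.eq_two_or_odd; omega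
    rw [show 3 * (k + 1) + 1 = 3 * k + 1 + 1 + 1 + 1 by ring, Nat.count_succ, Nat.count_succ,
      Nat.count_succ]
    split_ifs <;> simp_all
    omega

theorem Nat.three_mul_add_one_le_nth_prime {k : ℕ} (hk : 9 ≤ k) :
    3 * k + 1 ≤ Nat.nth Nat.Prime k :=
  (Nat.count_le_iff_le_nth Nat.infinite_setOfPred_prime).mp
    (Nat.count_prime_three_mul_add_one_le hk)

theorem Nat.nth_prime_card_le {a : ℕ} {s : Finset ℕ} (ha : a.Prime)
    (hs : ∀ x ∈ s, x.Prime ∧ x < a) : Nat.nth Nat.Prime s.card ≤ a := by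
  refine Nat.lt_succ_iff.mp (Nat.nth_lt_of_lt_count ?_)
  rw [Nat.count_eq_card_filter_range]
  refine (card_lt_card (ssubset_insert (a := a) ?_)).trans_le (card_le_card ?_)
  · exact fun h => (lt_irrefl a) (hs a h).2
  · intro x hx
    rcases mem_insert.mp hx with rfl | hx
    · simp [ha]
    · simp [(hs x hx).1, (hs x hx).2.trans (Nat.lt_succ_self a)]

-- `primeTailSum` of the set of the first `k` primes.
noncomputable def firstPrimesTailSum : ℕ → ℝ
  | 0 => 0
  | k + 1 => 1 + (1 - (Nat.nth Nat.Prime k : ℝ)⁻¹)⁻¹ * firstPrimesTailSum k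

theorem firstPrimesTailSum_nonneg (k : ℕ) : 0 ≤ firstPrimesTailSum k := by
  induction k with
  | zero => exact le_rfl
  | succ k ih =>
    have := one_sub_inv_inv_nonneg (Nat.nth Nat.Prime k)
    rw [firstPrimesTailSum]
    positivity

theorem primeTailSum_le_firstPrimesTailSum (Q : Finset ℕ) (hQ : ∀ q ∈ Q, q.Prime) :
    primeTailSum Q ≤ firstPrimesTailSum Q.card := by
  induction Q using Finset.induction_on_max with
  | empty => simp [primeTailSum, firstPrimesTailSum]
  | insert a s hlt ih =>
    have ha : a.Prime := hQ a (mem_insert_self a s)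
    have hs : ∀ x ∈ s, x.Prime ∧ x < a := fun x hx =>
      ⟨hQ x (mem_insert_of_mem hx), hlt x hx⟩
    rw [primeTailSum_insert hlt, card_insert_of_notMem (fun h => lt_irrefl a (hlt a h)),
      firstPrimesTailSum]
    gcongr 1 + ?_
    calc (1 - (a : ℝ)⁻¹)⁻¹ * primeTailSum s
        ≤ (1 - (a : ℝ)⁻¹)⁻¹ * firstPrimesTailSum s.card := by
          have := one_sub_inv_inv_nonneg a
          gcongr
          exact ih fun x hx => (hs x hx).1
      _ ≤ _ := mul_le_mul_of_nonneg_right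
          (one_sub_inv_inv_le_of_le (Nat.prime_nth_prime _).two_le (Nat.nth_prime_card_le ha hs))
          (firstPrimesTailSum_nonneg _)

theorem firstPrimesTailSum_le (k : ℕ) :
    firstPrimesTailSum k ≤ (166822111 / 109486080 : ℝ) * k := by
  induction k with
  | zero => simp [firstPrimesTailSum]
  | succ k ih =>
    by_cases hk : k < 9
    · have h5 : Nat.nth Nat.Prime 5 = 13 := by
        rw [show 5 = Nat.count Nat.Prime 13 by decide]; exact Nat.nth_count (by norm_num)
      have h6 : Nat.nth Nat.Prime 6 = 17 := by
        rw [show 6 = Nat.count Nat.Prime 17 by decide]; exact Nat.nth_count (by norm_num)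
      have h7 : Nat.nth Nat.Prime 7 = 19 := by
        rw [show 7 = Nat.count Nat.Prime 19 by decide]; exact Nat.nth_count (by norm_num)
      have h8 : Nat.nth Nat.Prime 8 = 23 := by
        rw [show 8 = Nat.count Nat.Prime 23 by decide]; exact Nat.nth_count (by norm_num)
      interval_cases k <;> norm_num [firstPrimesTailSum, h5, h6, h7, h8]
    · have hk' : (9 : ℝ) ≤ k := by exact_mod_cast not_lt.mp hk
      have hfactor : (1 - (Nat.nth Nat.Prime k : ℝ)⁻¹)⁻¹ ≤ (3 * k + 1) / (3 * k) := by
        refine (one_sub_inv_inv_le_of_le (by omega)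
          (Nat.three_mul_add_one_le_nth_prime (not_lt.mp hk))).trans_eq ?_
        push_cast
        field_simp
        ring
      rw [firstPrimesTailSum]
      calc 1 + (1 - (Nat.nth Nat.Prime k : ℝ)⁻¹)⁻¹ * firstPrimesTailSum k
          ≤ 1 + (3 * k + 1) / (3 * k) * ((166822111 / 109486080 : ℝ) * k) :=
            add_le_add_right (mul_le_mul hfactor ih (firstPrimesTailSum_nonneg k) (by positivity)) 1
        _ ≤ _ := by
            push_cast
            field_simp
            nlinarith

end PrimeTailSum

theorem stmt7 (n : ℕ) (hn : 1 ≤ n) :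
    littleCrossNumber (ZMod n) ≤ alphaFn n ∧
    alphaFn n ≤ (166822111 / 109486080 : ℝ) * (n.primeFactors.card : ℝ) := by
  have : NeZero n := ⟨by omega⟩
  refine ⟨Real.sSup_le ?_ (alphaFn_nonneg n), ?_⟩
  · rintro _ ⟨S, hS, rfl⟩
    simpa [Nat.card_zmod] using hS.crossNumber_le_alphaFn
  · calc alphaFn n ≤ primeTailSum n.primeFactors := alphaFn_le_primeTailSum (by omega)
      _ ≤ firstPrimesTailSum n.primeFactors.card :=
        primeTailSum_le_firstPrimesTailSum _ fun _ hq => Nat.prime_of_mem_primeFactors hq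
      _ ≤ _ := firstPrimesTailSum_le _
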